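/- Fix real ν1, ν2 and set τ2 = (1 + ν1 − ν2)/2, τ1 = 1 − τ2, τ3 = ν1ν2 + (α+β)(ν1+ν2−1)/2. Let α̃ = −α−β−ν1−ν2 and assume (α̃+1)_k ≠ 0 for all 0 ≤ k ≤ n and (α̃+β+n+1)_n ≠ 0, so that the monic Jacobi polynomial P̂_n^{(α̃,β)} is defined. Define ψ_n : (0,1) → ℝ by ψ_n(x) = x^{ν2−1}·P̂_n^{(α̃,β)}(1/x). Then for every x ∈ (0,1), (M ψ_n)(x) = λ̃_n ψ_n(x), where λ̃_n = n(n−1) + (2−ν1−ν2−α)n + τ0 + ν1ν2 + (α−1)(ν1+ν2−1)/2. -/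

import Mathlib

/-- The Pochhammer symbol `(c)_k = c(c+1)⋯(c+k-1)` for a real `c`. -/
noncomputable def poch (c : ℝ) (k : ℕ) : ℝ := ∏ i ∈ Finset.range k, (c + i)

/-- The monic Jacobi polynomial (as a real function)
`P̂_n^{(a,b)}(x) = ((-1)^n (a+1)_n / (a+b+n+1)_n) Σ_{k=0}^n
  [(-n)_k (n+a+b+1)_k / ((a+1)_k k!)] x^k`. -/
noncomputable def monicJacobi (a b : ℝ) (n : ℕ) (x : ℝ) : ℝ :=
  ((-1) ^ n * poch (a + 1) n / poch (a + b + n + 1) n) *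
    ∑ k ∈ Finset.range (n + 1),
      (poch (-(n : ℝ)) k * poch ((n : ℝ) + a + b + 1) k /
        (poch (a + 1) k * (Nat.factorial k : ℝ))) * x ^ k

/-- The tridiagonalized operator in explicit form. -/
noncomputable def Mfun (α β τ0 τ2 τ3 : ℝ) (f : ℝ → ℝ) (x : ℝ) : ℝ :=
  x ^ 2 * (1 - x) * deriv (deriv f) x
    + x * (α + 1 + 2 * τ2 - (α + β + 2 + 2 * τ2) * x) * deriv f x
    + (-(τ2 * (α + β + 2) - τ3) * x + (α + 1) * τ2 + τ0) * f x

lemma poch_succ (c : ℝ) (k : ℕ) : poch c (k + 1) = poch c k * (c + k) := by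
  simp [poch, Finset.prod_range_succ]

lemma poch_ne_factor {c : ℝ} {k : ℕ} (h : poch c (k + 1) ≠ 0) : c + k ≠ 0 := by
  rw [poch_succ] at h
  exact right_ne_zero_of_mul h

lemma poch_ne_prev {c : ℝ} {k : ℕ} (h : poch c (k + 1) ≠ 0) : poch c k ≠ 0 := by
  rw [poch_succ] at h
  exact left_ne_zero_of_mul h

/-- The functions `ψ_n(x) = x^{ν2-1} P̂_n^{(α̃,β)}(1/x)`, with
`α̃ = -α-β-ν1-ν2`, are eigenfunctions of `M` with eigenvalues
`λ̃_n = n(n-1) + (2-ν1-ν2-α)n + τ0 + ν1ν2 + (α-1)(ν1+ν2-1)/2`. -/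
theorem M_eigenfunctions_dual (α β τ0 ν1 ν2 : ℝ) (n : ℕ)
    (τ1 τ2 τ3 αt : ℝ)
    (hτ2 : τ2 = (1 + ν1 - ν2) / 2) (hτ1 : τ1 = 1 - τ2)
    (hτ3 : τ3 = ν1 * ν2 + (α + β) * (ν1 + ν2 - 1) / 2)
    (hαt : αt = -α - β - ν1 - ν2)
    (hpoch1 : ∀ k : ℕ, k ≤ n → poch (αt + 1) k ≠ 0)
    (hpoch2 : poch (αt + β + n + 1) n ≠ 0) :
    ∀ x ∈ Set.Ioo (0 : ℝ) 1,
      Mfun α β τ0 τ2 τ3 (fun t => t ^ (ν2 - 1) * monicJacobi αt β n (1 / t)) x =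
        ((n : ℝ) * ((n : ℝ) - 1) + (2 - ν1 - ν2 - α) * (n : ℝ)
            + τ0 + ν1 * ν2 + (α - 1) * (ν1 + ν2 - 1) / 2) *
          (x ^ (ν2 - 1) * monicJacobi αt β n (1 / x)) := by
  intro x hx
  obtain ⟨hx0, hx1⟩ := hx
  have hxne : x ≠ 0 := ne_of_gt hx0
  set lam : ℝ := (n : ℝ) * ((n : ℝ) - 1) + (2 - ν1 - ν2 - α) * (n : ℝ)
      + τ0 + ν1 * ν2 + (α - 1) * (ν1 + ν2 - 1) / 2 with hlam
  set d : ℕ → ℝ := fun k =>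
    ((-1) ^ n * poch (αt + 1) n / poch (αt + β + n + 1) n) *
      (poch (-(n : ℝ)) k * poch ((n : ℝ) + αt + β + 1) k /
        (poch (αt + 1) k * (Nat.factorial k : ℝ))) with hd
  set g : ℝ → ℝ := fun t => ∑ k ∈ Finset.range (n + 1), d k * t ^ (ν2 - 1 - k) with hg
  set g1 : ℝ → ℝ := fun t => ∑ k ∈ Finset.range (n + 1),
      d k * ((ν2 - 1 - k) * t ^ (ν2 - 1 - k - 1)) with hg1
  set g2 : ℝ → ℝ := fun t => ∑ k ∈ Finset.range (n + 1),
      d k * ((ν2 - 1 - k) * ((ν2 - 1 - k - 1) * t ^ (ν2 - 1 - k - 1 - 1))) with hg2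
  -- ψ agrees with g on (0,1)
  have hψg : ∀ t ∈ Set.Ioo (0 : ℝ) 1, t ^ (ν2 - 1) * monicJacobi αt β n (1 / t) = g t := by
    intro t ht
    have ht0 : (0 : ℝ) < t := ht.1
    rw [hg, monicJacobi]
    simp only [Finset.mul_sum]
    refine Finset.sum_congr rfl fun k _ => ?_
    have h1 : (1 / t) ^ k = t ^ (-(k : ℝ)) := by
      rw [Real.rpow_neg ht0.le, Real.rpow_natCast]
      simp [one_div]
    rw [hd, h1, ← Real.rpow_natCast]
    rw [show ν2 - 1 - (k : ℝ) = -(k : ℝ) + (ν2 - 1) by ring, Real.rpow_add ht0]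
    rw [Real.rpow_neg ht0.le]
    ring
  -- derivatives of g
  have hgd : ∀ t : ℝ, 0 < t → HasDerivAt g (g1 t) t := by
    intro t ht
    exact HasDerivAt.fun_sum fun k _ =>
      (Real.hasDerivAt_rpow_const (Or.inl (ne_of_gt ht))).const_mul (d k)
  have hg1d : ∀ t : ℝ, 0 < t → HasDerivAt g1 (g2 t) t := by
    intro t ht
    exact HasDerivAt.fun_sum fun k _ =>
      (((Real.hasDerivAt_rpow_const (p := ν2 - 1 - k - 1)
        (Or.inl (ne_of_gt ht))).const_mul (ν2 - 1 - (k : ℝ))).const_mul (d k))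
  -- rewrite the derivatives in the goal
  have hev : (fun t => t ^ (ν2 - 1) * monicJacobi αt β n (1 / t)) =ᶠ[nhds x] g :=
    Filter.eventually_of_mem (isOpen_Ioo.mem_nhds ⟨hx0, hx1⟩) hψg
  have hd1 : ∀ y ∈ Set.Ioo (0 : ℝ) 1,
      deriv (fun t => t ^ (ν2 - 1) * monicJacobi αt β n (1 / t)) y = g1 y := by
    intro y hy
    have hevy : (fun t => t ^ (ν2 - 1) * monicJacobi αt β n (1 / t)) =ᶠ[nhds y] g :=
      Filter.eventually_of_mem (isOpen_Ioo.mem_nhds hy) hψg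
    rw [hevy.deriv_eq, (hgd y hy.1).deriv]
  have hd1x : deriv (fun t => t ^ (ν2 - 1) * monicJacobi αt β n (1 / t)) x = g1 x :=
    hd1 x ⟨hx0, hx1⟩
  have hd2x : deriv (deriv (fun t => t ^ (ν2 - 1) * monicJacobi αt β n (1 / t))) x = g2 x := by
    have hev1 : deriv (fun t => t ^ (ν2 - 1) * monicJacobi αt β n (1 / t)) =ᶠ[nhds x] g1 :=
      Filter.eventually_of_mem (isOpen_Ioo.mem_nhds ⟨hx0, hx1⟩) hd1
    rw [hev1.deriv_eq, (hg1d x hx0).deriv]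
  rw [Mfun, hd1x, hd2x, hψg x ⟨hx0, hx1⟩]
  -- now a purely algebraic statement about g, g1, g2 at x
  -- expand into sums with coefficients Q and P
  set X : ℕ → ℝ := fun k => x ^ (ν2 - 1 - k) with hX
  set Q : ℕ → ℝ := fun k => (ν2 - 1 - k) * (ν2 - 1 - k - 1) + (α + 1 + 2 * τ2) * (ν2 - 1 - k)
      + ((α + 1) * τ2 + τ0) with hQ
  set P : ℕ → ℝ := fun k => -((ν2 - 1 - k) * (ν2 - 1 - k - 1)) - (α + β + 2 + 2 * τ2) * (ν2 - 1 - k)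
      + (-(τ2 * (α + β + 2) - τ3)) with hP
  have hsub1 : ∀ k : ℕ, x ^ (ν2 - 1 - (k : ℝ) - 1) = X k / x := by
    intro k
    rw [hX, Real.rpow_sub hx0, Real.rpow_one]
  have hsub2 : ∀ k : ℕ, x ^ (ν2 - 1 - (k : ℝ) - 1 - 1) = X k / x / x := by
    intro k
    rw [Real.rpow_sub hx0, Real.rpow_one, hsub1]
  have expand : x ^ 2 * (1 - x) * g2 x
      + x * (α + 1 + 2 * τ2 - (α + β + 2 + 2 * τ2) * x) * g1 x
      + (-(τ2 * (α + β + 2) - τ3) * x + (α + 1) * τ2 + τ0) * g x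
      = ∑ k ∈ Finset.range (n + 1), (d k * Q k * X k + d k * P k * (X k * x)) := by
    rw [hg, hg1, hg2, Finset.mul_sum, Finset.mul_sum, Finset.mul_sum,
      ← Finset.sum_add_distrib, ← Finset.sum_add_distrib]
    refine Finset.sum_congr rfl fun k _ => ?_
    rw [hsub1, hsub2, hQ, hP]
    field_simp
    ring
  rw [expand, hg, Finset.mul_sum]
  -- reduce to termwise recurrence
  have hXshift : ∀ k : ℕ, X (k + 1) * x = X k := by
    intro k
    rw [hX]
    simp only [Nat.cast_add, Nat.cast_one]
    rw [← Real.rpow_add_one hxne, show ν2 - 1 - ((k : ℝ) + 1) + 1 = ν2 - 1 - k by ring]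
  have hP0 : P 0 = 0 := by
    rw [hP]; subst hτ2 hτ3; push_cast; ring
  have hQn : Q n = lam := by
    rw [hQ, hlam]; subst hτ2 hτ3; ring
  have hrec : ∀ k : ℕ, k < n → d k * Q k * X k + d (k + 1) * P (k + 1) * X k
      = lam * (d k * X k) := by
    intro k hk
    have key : d k * Q k + d (k + 1) * P (k + 1) = lam * d k := by
      have h3 : poch (αt + 1) k ≠ 0 := hpoch1 k (le_of_lt hk)
      have h4 : poch (αt + 1) (k + 1) ≠ 0 := hpoch1 (k + 1) hk
      have h5 : αt + 1 + (k : ℝ) ≠ 0 := poch_ne_factor h4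
      have hfk : (Nat.factorial k : ℝ) ≠ 0 := Nat.cast_ne_zero.mpr (Nat.factorial_ne_zero k)
      have hk1 : ((k : ℝ) + 1) ≠ 0 := by positivity
      rw [hd, hQ, hP, hlam]
      simp only [poch_succ, Nat.factorial_succ, Nat.cast_mul, Nat.cast_add, Nat.cast_one]
      subst hτ2 hτ3 hαt
      field_simp
      ring
    calc d k * Q k * X k + d (k + 1) * P (k + 1) * X k
        = (d k * Q k + d (k + 1) * P (k + 1)) * X k := by ring
      _ = lam * d k * X k := by rw [key]
      _ = lam * (d k * X k) := by ring
  -- sum manipulation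
  have split : ∑ k ∈ Finset.range (n + 1), (d k * Q k * X k + d k * P k * (X k * x))
      = ∑ k ∈ Finset.range (n + 1), d k * Q k * X k
        + ∑ k ∈ Finset.range (n + 1), d k * P k * (X k * x) :=
    Finset.sum_add_distrib
  rw [split]
  rw [Finset.sum_range_succ' (fun k => d k * P k * (X k * x)) n]
  simp only [hP0, mul_zero, zero_mul, add_zero]
  rw [Finset.sum_range_succ (fun k => d k * Q k * X k) n]
  rw [Finset.sum_range_succ (fun k => lam * (d k * X k)) n]
  have : ∑ k ∈ Finset.range n, d k * Q k * X k
      + ∑ k ∈ Finset.range n, d (k + 1) * P (k + 1) * (X (k + 1) * x)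
      = ∑ k ∈ Finset.range n, lam * (d k * X k) := by
    rw [← Finset.sum_add_distrib]
    refine Finset.sum_congr rfl fun k hk => ?_
    rw [hXshift k]
    exact hrec k (Finset.mem_range.mp hk)
  rw [hQn] at *
  linarith [this]
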